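/- If (X, τ) is selectively separable, then (X, τ^α) is selectively separable, and conversely. -/

import Mathlib

def alphaOpens (X : Type*) [TopologicalSpace X] : Set (Set X) :=
  {U | ∃ V N : Set X, IsOpen V ∧ IsNowhereDense N ∧ U = V \ N}

def tAlpha (X : Type*) [TopologicalSpace X] : TopologicalSpace X :=
  TopologicalSpace.generateFrom (alphaOpens X)

/-- A space is selectively separable (SS) if for every sequence of dense sets `D n`
there are finite `F n ⊆ D n` with `⋃ n, F n` dense. -/
def SelSep (Z : Type*) [TopologicalSpace Z] : Prop :=
  ∀ D : ℕ → Set Z, (∀ n, Dense (D n)) →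
    ∃ F : ℕ → Set Z, (∀ n, F n ⊆ D n) ∧ (∀ n, (F n).Finite) ∧ Dense (⋃ n, F n)

/-!
Selective separability only refers to the family of dense sets, and `τ` and `τ^α` have the same
dense sets. The sets `V \ N` form a basis of `τ^α`, since they are closed under finite
intersections, and a `τ`-dense set `D` meets a nonempty `V \ N` because it meets the open set
`V \ closure N`, which is nonempty as `N` is nowhere dense.
-/

open Set TopologicalSpace

section

variable {X : Type*} [TopologicalSpace X]

lemma IsNowhereDense.union {s t : Set X} (hs : IsNowhereDense s) (ht : IsNowhereDense t) :
    IsNowhereDense (s ∪ t) := by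
  rw [IsNowhereDense, closure_union,
    interior_union_isClosed_of_interior_empty isClosed_closure ht, hs]

lemma IsOpen.mem_alphaOpens {V : Set X} (hV : IsOpen V) : V ∈ alphaOpens X :=
  ⟨V, ∅, hV, isNowhereDense_empty, sdiff_empty.symm⟩

lemma finiteInter_alphaOpens : FiniteInter (alphaOpens X) where
  univ_mem := isOpen_univ.mem_alphaOpens
  inter_mem := by
    rintro _ ⟨V₁, N₁, hV₁, hN₁, rfl⟩ _ ⟨V₂, N₂, hV₂, hN₂, rfl⟩
    exact ⟨V₁ ∩ V₂, N₁ ∪ N₂, hV₁.inter hV₂, hN₁.union hN₂, by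
      ext; simp only [mem_inter_iff, mem_sdiff, mem_union]; tauto⟩

lemma isTopologicalBasis_alphaOpens : @IsTopologicalBasis X (tAlpha X) (alphaOpens X) :=
  @isTopologicalBasis_of_subbasis_of_finiteInter X (tAlpha X) _ rfl finiteInter_alphaOpens

lemma Dense.inter_nonempty_of_mem_alphaOpens {D U : Set X} (hD : Dense D)
    (hU : U ∈ alphaOpens X) (hne : U.Nonempty) : (U ∩ D).Nonempty := by
  obtain ⟨V, N, hV, hN, rfl⟩ := hU
  have hV_sub : ¬ V ⊆ closure N := fun h ↦ by
    obtain ⟨x, hx, -⟩ := hne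
    have hx_int : x ∈ interior (closure N) := hV.subset_interior_iff.mpr h hx
    rwa [hN] at hx_int
  obtain ⟨x, ⟨hxV, hxN⟩, hxD⟩ :=
    hD.inter_open_nonempty _ (hV.sdiff isClosed_closure) (sdiff_nonempty.mpr hV_sub)
  exact ⟨x, ⟨hxV, fun h ↦ hxN (subset_closure h)⟩, hxD⟩

lemma dense_tAlpha_iff {D : Set X} : @Dense X (tAlpha X) D ↔ Dense D := by
  refine (@IsTopologicalBasis.dense_iff X (tAlpha X) _ isTopologicalBasis_alphaOpens D).trans
    ⟨fun h ↦ dense_iff_inter_open.mpr fun U hU ↦ h U hU.mem_alphaOpens,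
      fun hD _ hU ↦ hD.inter_nonempty_of_mem_alphaOpens hU⟩

end

theorem selSep_iff_selSep_tauAlpha {X : Type*} [t : TopologicalSpace X] :
    SelSep X ↔ @SelSep X (tAlpha X) := by
  simp only [SelSep, dense_tAlpha_iff]
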